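/- arXiv:1502.06546 — 3 statements merged into one kernel-verified Lean document; each statement's English description precedes it below -/
import Mathlib

section
/- Let m be an even positive natural number and N a natural number, and let γ : Fin N → ℤ/mℤ. Suppose there exists an index r such that γ r is even (its image under the natural ring homomorphism ℤ/mℤ → ℤ/2ℤ is 0). Then the number of functions δ : Fin N → ℤ/mℤ for which the sum Σ_{i} (1 − γ i)*(1 − δ i) is even equals m^N / 2, and the number of δ for which this sum is odd also equals m^N / 2. -/
private lemma zmod2_neg (a : ZMod 2) : -a = a := by revert a; decide
private lemma zmod2_add_self (a : ZMod 2) : a + a = 0 := by revert a; decide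
private lemma zmod2_iff (a : ZMod 2) : a = 1 ↔ ¬ a = 0 := by revert a; decide

private lemma half_count {α : Type*} [Fintype α] (φ : α → ZMod 2)
    (e : {a : α // φ a = 0} ≃ {a : α // φ a = 1}) :
    Nat.card {a : α // φ a = 0} = Fintype.card α / 2 ∧
    Nat.card {a : α // φ a = 1} = Fintype.card α / 2 := by
  classical
  have hcardeq : Nat.card {a : α // φ a = 0} = Nat.card {a : α // φ a = 1} :=
    Nat.card_congr e
  have htotal : Nat.card {a : α // φ a = 0} + Nat.card {a : α // φ a = 1}
      = Fintype.card α := by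
    rw [Nat.card_eq_fintype_card, Nat.card_eq_fintype_card]
    have h1 : Fintype.card {a : α // φ a = 1} = Fintype.card {a : α // ¬ φ a = 0} :=
      Fintype.card_congr (Equiv.subtypeEquivRight fun a => zmod2_iff (φ a))
    have hle : Fintype.card {a : α // φ a = 0} ≤ Fintype.card α :=
      Fintype.card_subtype_le _
    have h3 := Fintype.card_subtype_compl (fun a : α => φ a = 0)
    omega
  constructor <;> omega

/-- Counting claim from part 5 of Theorem 4.13: if some `γ r` is even, then
exactly half of the choices of `δ : Fin N → ℤ/mℤ` make
`Σ (1 - γ i)(1 - δ i)` even, and half make it odd. -/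
theorem stmt_12 (m : ℕ) (hm : 0 < m) (h2 : 2 ∣ m) (N : ℕ) (γ : Fin N → ZMod m)
    (hγ : ∃ r, ZMod.castHom h2 (ZMod 2) (γ r) = 0) :
    Nat.card {δ : Fin N → ZMod m //
        ZMod.castHom h2 (ZMod 2) (∑ i, (1 - γ i) * (1 - δ i)) = 0} = m ^ N / 2 ∧
    Nat.card {δ : Fin N → ZMod m //
        ZMod.castHom h2 (ZMod 2) (∑ i, (1 - γ i) * (1 - δ i)) = 1} = m ^ N / 2 := by
  obtain ⟨r, hr⟩ := hγ
  haveI : NeZero m := ⟨hm.ne'⟩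
  let φ : (Fin N → ZMod m) → ZMod 2 :=
    fun δ => ZMod.castHom h2 (ZMod 2) (∑ i, (1 - γ i) * (1 - δ i))
  have helper : ∀ (δ : Fin N → ZMod m) (v : ZMod m),
      φ (Function.update δ r v) = φ δ + (ZMod.castHom h2 (ZMod 2) (δ r)
        + ZMod.castHom h2 (ZMod 2) v) := by
    intro δ v
    have hsum : (∑ i, (1 - γ i) * (1 - Function.update δ r v i))
        = (∑ i, (1 - γ i) * (1 - δ i)) + (1 - γ r) * (δ r - v) := by
      have : ∀ i : Fin N, (1 - γ i) * (1 - Function.update δ r v i)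
          = (1 - γ i) * (1 - δ i) + (if i = r then (1 - γ r) * (δ r - v) else 0) := by
        intro i
        by_cases h : i = r
        · subst h; simp [Function.update_self]; ring
        · simp [Function.update_of_ne h, h]
      rw [Finset.sum_congr rfl (fun i _ => this i), Finset.sum_add_distrib,
        Finset.sum_ite_eq' Finset.univ r]
      simp
    show ZMod.castHom h2 (ZMod 2) (∑ i, (1 - γ i) * (1 - Function.update δ r v i)) = _
    rw [hsum, map_add, map_mul, map_sub, map_sub, map_one, hr, sub_zero, one_mul,
      sub_eq_add_neg, zmod2_neg]
  have key : ∀ (δ : Fin N → ZMod m), φ (Function.update δ r (δ r + 1)) = φ δ + 1 := by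
    intro δ
    rw [helper, map_add, map_one]
    linear_combination zmod2_add_self ((ZMod.castHom h2 (ZMod 2)) (δ r))
  have key' : ∀ (δ : Fin N → ZMod m), φ (Function.update δ r (δ r - 1)) = φ δ + 1 := by
    intro δ
    rw [helper, map_sub, map_one, sub_eq_add_neg, zmod2_neg]
    linear_combination zmod2_add_self ((ZMod.castHom h2 (ZMod 2)) (δ r))
  have e : {δ : Fin N → ZMod m // φ δ = 0} ≃ {δ : Fin N → ZMod m // φ δ = 1} := by
    refine ⟨fun x => ⟨Function.update x.1 r (x.1 r + 1), by rw [key, x.2]; decide⟩,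
      fun x => ⟨Function.update x.1 r (x.1 r - 1), by rw [key', x.2]; decide⟩, ?_, ?_⟩
    · rintro ⟨δ, hδ⟩
      apply Subtype.ext
      simp only
      rw [Function.update_idem, Function.update_self]
      have : δ r + 1 - 1 = δ r := by ring
      rw [this, Function.update_eq_self]
    · rintro ⟨δ, hδ⟩
      apply Subtype.ext
      simp only
      rw [Function.update_idem, Function.update_self]
      have : δ r - 1 + 1 = δ r := by ring
      rw [this, Function.update_eq_self]
  have main := half_count φ e
  have hcard : Fintype.card (Fin N → ZMod m) = m ^ N := by simp [ZMod.card]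
  rw [hcard] at main
  exact main
end

section
/- Let m be a natural number with m ≡ 2 (mod 4) and let N be a natural number. Then the number of pairs (γ, δ) of functions Fin N → ℤ/mℤ such that every γ i lies in {0, (m/2 : ℤ/mℤ)} and the sum Σ_{i} (1 − γ i)*(1 − δ i) is odd (its image under the natural ring homomorphism ℤ/mℤ → ℤ/2ℤ is 1) equals (2^N − 1) * m^N / 2. -/
/-!
Read a pair `(γ, δ)` as a word of length `N` over the alphabet `S = {0, c} × ℤ/mℤ`, `c = m/2`, the
letter `(a, b)` having parity weight `t (a, b) = (1 - a)(1 - b)`. The sum of the sign of the total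
weight over all words factorises, so twice the number of odd words is
`|S|^N - (Σ_{a ∈ S} (-1)^{t a})^N`. As `c` is odd, letters `(c, b)` have weight `0`, while the signs
of the letters `(0, b)` cancel because reduction mod `2` is a nontrivial additive character; so
the character sum is `m` and twice the count is `(2m)^N - m^N`.
-/

open Finset

namespace AddChar

variable {ι A M : Type*} [AddCommMonoid A] [CommMonoid M]

lemma map_sum_eq_prod (ψ : AddChar A M) (s : Finset ι) (a : ι → A) :
    ψ (∑ i ∈ s, a i) = ∏ i ∈ s, ψ (a i) := by
  induction s using Finset.cons_induction with
  | empty => simp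
  | cons j s hj ih => rw [sum_cons, prod_cons, map_add_eq_mul, ih]

end AddChar

namespace ZMod

def signChar : AddChar (ZMod 2) ℤ := AddChar.zmodChar 2 (ζ := -1) (by norm_num)

lemma signChar_apply (x : ZMod 2) : signChar x = (-1) ^ x.val := AddChar.zmodChar_apply _ x

lemma signChar_eq (x : ZMod 2) : signChar x = 1 - 2 * if x = 1 then 1 else 0 := by
  fin_cases x <;> rfl

end ZMod

open ZMod

theorem two_mul_card_filter_sum_eq_one {ι α : Type*} [Fintype ι] [DecidableEq ι]
    (S : Finset α) (t : α → ZMod 2) :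
    2 * (#{v ∈ Fintype.piFinset fun _ : ι => S | ∑ i, t (v i) = 1} : ℤ) =
      #S ^ Fintype.card ι - (∑ a ∈ S, (-1 : ℤ) ^ (t a).val) ^ Fintype.card ι := by
  have hchar : (∑ a ∈ S, (-1 : ℤ) ^ (t a).val) ^ Fintype.card ι =
      ∑ v ∈ Fintype.piFinset fun _ : ι => S, (1 - 2 * if ∑ i, t (v i) = 1 then 1 else 0) :=
    calc (∑ a ∈ S, (-1 : ℤ) ^ (t a).val) ^ Fintype.card ι
        = ∏ _i : ι, ∑ a ∈ S, signChar (t a) := by simp [signChar_apply]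
      _ = ∑ v ∈ Fintype.piFinset fun _ : ι => S, ∏ i, signChar (t (v i)) := prod_univ_sum _ _
      _ = _ := sum_congr rfl fun v _ => by rw [← AddChar.map_sum_eq_prod, signChar_eq]
  rw [hchar, sum_sub_distrib, ← mul_sum, sum_boole]
  simp

theorem sum_neg_one_pow_val_eq_zero {G : Type*} [AddGroup G] [Fintype G] {f : G →+ ZMod 2}
    (hf : f ≠ 0) : ∑ g, (-1 : ℤ) ^ (f g).val = 0 := by
  have hψ : signChar.compAddMonoidHom f ≠ 1 := by
    obtain ⟨g, hg⟩ := DFunLike.ne_iff.1 hf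
    have hg1 : f g = 1 := (by decide : ∀ x : ZMod 2, x ≠ 0 → x = 1) _ hg
    exact AddChar.ne_one_iff.2 ⟨g, by simp [hg1, signChar_eq]⟩
  simpa [signChar_apply] using AddChar.sum_eq_zero_of_ne_one hψ

section ArfCount

variable {R : Type*} [CommRing R] [Fintype R] [DecidableEq R] (f : R →+* ZMod 2) {c : R}

theorem sum_neg_one_pow_mul_one_sub_eq_card (hc : f c = 1) :
    ∑ a ∈ ({0, c} ×ˢ univ : Finset (R × R)), (-1 : ℤ) ^ (f ((1 - a.1) * (1 - a.2))).val =
      Fintype.card R := by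
  have hc0 : c ≠ 0 := fun h => by simp [h] at hc
  have hf : (f : R →+ ZMod 2) ≠ 0 := fun h =>
    one_ne_zero (α := ZMod 2) (by simpa using DFunLike.congr_fun h 1)
  have hsum : ∑ b : R, (-1 : ℤ) ^ (f (1 - b)).val = 0 :=
    (Fintype.sum_equiv (Equiv.subLeft 1) _ (fun b => (-1 : ℤ) ^ (f b).val) fun _ => rfl).trans <|
      sum_neg_one_pow_val_eq_zero hf
  rw [sum_product, sum_pair hc0.symm]
  simp only [sub_zero, one_mul]
  rw [hsum]
  simp [hc]

theorem two_mul_natCard_odd_arf (hc : f c = 1) (N : ℕ) :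
    2 * Nat.card {p : (Fin N → R) × (Fin N → R) //
        (∀ i, p.1 i = 0 ∨ p.1 i = c) ∧ f (∑ i, (1 - p.1 i) * (1 - p.2 i)) = 1} =
      (2 ^ N - 1) * Fintype.card R ^ N := by
  have hc0 : c ≠ 0 := fun h => by simp [h] at hc
  have hwords : Nat.card {p : (Fin N → R) × (Fin N → R) //
        (∀ i, p.1 i = 0 ∨ p.1 i = c) ∧ f (∑ i, (1 - p.1 i) * (1 - p.2 i)) = 1} =
      #{v ∈ Fintype.piFinset fun _ : Fin N => ({0, c} ×ˢ univ : Finset (R × R)) |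
        ∑ i, f ((1 - (v i).1) * (1 - (v i).2)) = 1} := by
    rw [← Nat.card_eq_finsetCard]
    refine Nat.card_congr ((Equiv.arrowProdEquivProdArrow _ _ _).subtypeEquiv fun v => ?_).symm
    simp [map_sum]
  have hcount := two_mul_card_filter_sum_eq_one (ι := Fin N) ({0, c} ×ˢ univ)
    fun a : R × R => f ((1 - a.1) * (1 - a.2))
  rw [card_product, card_pair hc0.symm, sum_neg_one_pow_mul_one_sub_eq_card f hc] at hcount
  rw [hwords]
  zify [Nat.one_le_two_pow]
  rw [hcount]
  push_cast [card_univ, Fintype.card_fin]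
  ring

end ArfCount

/-- Counting step in part 6 of Theorem 4.13: for `m ≡ 2 (mod 4)`, the number of
pairs `(γ, δ)` with all `γ i ∈ {0, m/2}` and `Σ (1 - γ i)(1 - δ i)` odd equals
`(2^N - 1)·m^N/2`. -/
theorem stmt_15 (m : ℕ) (h2 : 2 ∣ m) (h4 : m % 4 = 2) (N : ℕ) :
    Nat.card {p : (Fin N → ZMod m) × (Fin N → ZMod m) //
        (∀ i, p.1 i = 0 ∨ p.1 i = ((m / 2 : ℕ) : ZMod m)) ∧
        ZMod.castHom h2 (ZMod 2) (∑ i, (1 - p.1 i) * (1 - p.2 i)) = 1} =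
      (2 ^ N - 1) * m ^ N / 2 := by
  have : NeZero m := ⟨by omega⟩
  have hc : ZMod.castHom h2 (ZMod 2) ((m / 2 : ℕ) : ZMod m) = 1 := by
    rw [map_natCast, natCast_eq_one_iff_odd, Nat.odd_iff]
    omega
  rw [← Nat.mul_div_cancel_left (Nat.card _) two_pos, two_mul_natCard_odd_arf _ hc, ZMod.card]
end

section
/- Let m be a natural number with m ≡ 2 (mod 4) and let N be a natural number. Then the number of pairs (γ, δ) of functions Fin N → ℤ/mℤ such that every γ i lies in {0, (m/2 : ℤ/mℤ)} and the sum Σ_{i} (1 − γ i)*(1 − δ i) is even (its image under the natural ring homomorphism ℤ/mℤ → ℤ/2ℤ is 0) equals (2^N + 1) * m^N / 2. -/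
lemma shift_helper (m : ℕ) (h2 : 2 ∣ m) (N : ℕ) (γ : Fin N → ZMod m)
    (i0 : Fin N) (h0 : γ i0 = 0) (δ : Fin N → ZMod m) :
    ZMod.castHom h2 (ZMod 2) (∑ i, (1 - γ i) * (1 - (δ + (Pi.single i0 1 : Fin N → ZMod m)) i)) =
      ZMod.castHom h2 (ZMod 2) (∑ i, (1 - γ i) * (1 - δ i)) + 1 := by
  have key : (∑ i, (1 - γ i) * (1 - (δ + (Pi.single i0 1 : Fin N → ZMod m)) i)) =
      (∑ i, (1 - γ i) * (1 - δ i)) - 1 := by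
    have h1 : ∀ i, (1 - γ i) * (1 - (δ + (Pi.single i0 1 : Fin N → ZMod m)) i) =
        (1 - γ i) * (1 - δ i) - (1 - γ i) * (Pi.single i0 1 : Fin N → ZMod m) i := by
      intro i; simp only [Pi.add_apply]; ring
    rw [Finset.sum_congr rfl fun i _ => h1 i, Finset.sum_sub_distrib]
    congr 1
    rw [Finset.sum_eq_single i0]
    · simp [h0]
    · intro b _ hb; simp [Pi.single_apply, hb]
    · simp
  rw [key, map_sub, map_one, sub_eq_add_neg]
  congr 1

lemma half_count_s16 (m : ℕ) [NeZero m] (h2 : 2 ∣ m) (N : ℕ) (γ : Fin N → ZMod m)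
    (i0 : Fin N) (h0 : γ i0 = 0) :
    2 * Fintype.card {δ : Fin N → ZMod m //
        ZMod.castHom h2 (ZMod 2) (∑ i, (1 - γ i) * (1 - δ i)) = 0} = m ^ N := by
  classical
  set φ := ZMod.castHom h2 (ZMod 2) with hφ
  set S : (Fin N → ZMod m) → ZMod 2 := fun δ => φ (∑ i, (1 - γ i) * (1 - δ i)) with hS
  have shift : ∀ δ, S (δ + (Pi.single i0 1 : Fin N → ZMod m)) = S δ + 1 :=
    fun δ => shift_helper m h2 N γ i0 h0 δ
  have hinv : ∀ δ : Fin N → ZMod m, S (δ - Pi.single i0 1) = S δ + 1 := by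
    intro δ
    have := shift (δ - Pi.single i0 1)
    rw [sub_add_cancel] at this
    have h01 : ∀ x y : ZMod 2, x = y + 1 → y = x + 1 := by decide
    exact h01 _ _ this
  have e : {δ // S δ = 0} ≃ {δ // ¬ S δ = 0} := by
    refine ⟨fun d => ⟨d.1 + Pi.single i0 1, ?_⟩, fun d => ⟨d.1 - Pi.single i0 1, ?_⟩, ?_, ?_⟩
    · rw [shift, d.2]; decide
    · rw [hinv]
      rcases (by decide : ∀ x : ZMod 2, x = 0 ∨ x = 1) (S d.1) with h | h
      · exact absurd h d.2
      · rw [h]; decide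
    · intro d; ext : 1; simp
    · intro d; ext : 1; simp
  have hle := Fintype.card_subtype_le (fun δ => S δ = 0)
  have hcompl := Fintype.card_subtype_compl (fun δ => S δ = 0)
  have hcong := Fintype.card_congr e
  have hall : Fintype.card (Fin N → ZMod m) = m ^ N := by
    rw [Fintype.card_fun, ZMod.card, Fintype.card_fin]
  show 2 * Fintype.card {δ // S δ = 0} = m ^ N
  omega


lemma allc_case (m : ℕ) [NeZero m] (h2 : 2 ∣ m) (h4 : m % 4 = 2) (N : ℕ)
    (γ : Fin N → ZMod m) (hγ : ∀ i, γ i = ((m / 2 : ℕ) : ZMod m)) (δ : Fin N → ZMod m) :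
    ZMod.castHom h2 (ZMod 2) (∑ i, (1 - γ i) * (1 - δ i)) = 0 := by
  have hc1 : ZMod.castHom h2 (ZMod 2) ((m / 2 : ℕ) : ZMod m) = 1 := by
    rw [map_natCast, show m / 2 = 2 * (m / 4) + 1 by omega]
    push_cast
    rw [show ((2:ZMod 2)) = 0 by decide]
    ring
  rw [map_sum]
  refine Finset.sum_eq_zero fun i _ => ?_
  rw [map_mul, map_sub, map_one, hγ i, hc1, sub_self, zero_mul]

lemma cne (m : ℕ) (h4 : m % 4 = 2) : ((m / 2 : ℕ) : ZMod m) ≠ 0 := by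
  haveI : NeZero m := ⟨by omega⟩
  rw [Ne, ZMod.natCast_eq_zero_iff]
  intro h
  have := Nat.le_of_dvd (by omega) h
  omega

lemma gamma_count (m : ℕ) [NeZero m] (h4 : m % 4 = 2) (N : ℕ) :
    Fintype.card {γ : Fin N → ZMod m // ∀ i, γ i = 0 ∨ γ i = ((m / 2 : ℕ) : ZMod m)} = 2 ^ N := by
  classical
  rw [Fintype.card_congr (Equiv.subtypePiEquivPi (p := fun _ x => x = 0 ∨ x = ((m / 2 : ℕ) : ZMod m))),
    Fintype.card_pi]
  have h2' : Fintype.card {x : ZMod m // x = 0 ∨ x = ((m / 2 : ℕ) : ZMod m)} = 2 := by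
    rw [Fintype.card_subtype]
    have : Finset.univ.filter (fun x : ZMod m => x = 0 ∨ x = ((m / 2 : ℕ) : ZMod m)) =
        {0, ((m / 2 : ℕ) : ZMod m)} := by
      ext x; simp
    rw [this, Finset.card_insert_of_notMem (by simpa using (cne m h4).symm),
      Finset.card_singleton]
  simp [h2']

/-- Counting step in part 6 of Theorem 4.13: for `m ≡ 2 (mod 4)`, the number of
pairs `(γ, δ)` with all `γ i ∈ {0, m/2}` and `Σ (1 - γ i)(1 - δ i)` even equals
`(2^N + 1)·m^N/2`. -/
theorem stmt_16 (m : ℕ) (h2 : 2 ∣ m) (h4 : m % 4 = 2) (N : ℕ) :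
    Nat.card {p : (Fin N → ZMod m) × (Fin N → ZMod m) //
        (∀ i, p.1 i = 0 ∨ p.1 i = ((m / 2 : ℕ) : ZMod m)) ∧
        ZMod.castHom h2 (ZMod 2) (∑ i, (1 - p.1 i) * (1 - p.2 i)) = 0} =
      (2 ^ N + 1) * m ^ N / 2 := by
  classical
  haveI : NeZero m := ⟨by omega⟩
  set c : ZMod m := ((m / 2 : ℕ) : ZMod m) with hc
  set A : (Fin N → ZMod m) → Prop := fun γ => ∀ i, γ i = 0 ∨ γ i = c with hA
  set B : (Fin N → ZMod m) → (Fin N → ZMod m) → Prop := fun γ δ =>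
    ZMod.castHom h2 (ZMod 2) (∑ i, (1 - γ i) * (1 - δ i)) = 0 with hB
  -- turn Nat.card into a sum of fintype cards over γ
  have step1 : Nat.card {p : (Fin N → ZMod m) × (Fin N → ZMod m) // A p.1 ∧ B p.1 p.2} =
      ∑ γ : Fin N → ZMod m, Fintype.card {δ // A γ ∧ B γ δ} := by
    rw [Nat.card_eq_fintype_card,
      Fintype.card_congr (Equiv.subtypeProdEquivSigmaSubtype (fun γ δ => A γ ∧ B γ δ)),
      Fintype.card_sigma]
  -- the per-γ counts
  have f0 : ∀ γ, ¬ A γ → Fintype.card {δ // A γ ∧ B γ δ} = 0 := by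
    intro γ hγ
    rw [Fintype.card_eq_zero_iff]
    exact ⟨fun d => hγ d.2.1⟩
  have fA : ∀ γ, A γ → Fintype.card {δ // A γ ∧ B γ δ} = Fintype.card {δ // B γ δ} := by
    intro γ hγ
    exact Fintype.card_congr (Equiv.subtypeEquivRight fun δ => and_iff_right hγ)
  have fc : Fintype.card {δ : Fin N → ZMod m // B (fun _ => c) δ} = m ^ N := by
    rw [Fintype.card_congr (Equiv.subtypeUnivEquiv fun δ =>
      allc_case m h2 h4 N (fun _ => c) (fun _ => rfl) δ)]
    rw [Fintype.card_fun, ZMod.card, Fintype.card_fin]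
  have fhalf : ∀ γ, A γ → γ ≠ (fun _ => c) →
      2 * Fintype.card {δ // B γ δ} = m ^ N := by
    intro γ hγ hne
    have : ∃ i0, γ i0 = 0 := by
      by_contra h
      push_neg at h
      exact hne (funext fun i => (hγ i).resolve_left (h i))
    obtain ⟨i0, h0⟩ := this
    exact half_count_s16 m h2 N γ i0 h0
  -- assemble
  rw [step1]
  set g : (Fin N → ZMod m) → ℕ := fun γ => Fintype.card {δ // A γ ∧ B γ δ} with hg
  set Γ : Finset (Fin N → ZMod m) := Finset.univ.filter A with hΓ
  have hsum1 : ∑ γ : Fin N → ZMod m, g γ = ∑ γ ∈ Γ, g γ := by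
    rw [hΓ, Finset.sum_filter_of_ne]
    intro γ _ hgγ
    by_contra h
    exact hgγ (f0 γ h)
  have hΓcard : Γ.card = 2 ^ N := by
    rw [hΓ, ← Fintype.card_subtype]
    exact gamma_count m h4 N
  have hmemc : (fun _ => c) ∈ Γ := by
    simp [hΓ, hA]
  have key : 2 * ∑ γ ∈ Γ, g γ = (2 ^ N + 1) * m ^ N := by
    rw [← Finset.add_sum_erase Γ g hmemc, Nat.mul_add]
    have t1 : 2 * g (fun _ => c) = 2 * m ^ N := by
      simp only [hg]
      rw [fA _ (fun _ => Or.inr rfl), fc]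
    have t2 : 2 * ∑ γ ∈ Γ.erase (fun _ => c), g γ = (2 ^ N - 1) * m ^ N := by
      rw [Finset.mul_sum]
      rw [Finset.sum_congr rfl (fun γ hγ => ?_), Finset.sum_const,
        Finset.card_erase_of_mem hmemc, hΓcard, smul_eq_mul]
      rw [Finset.mem_erase] at hγ
      have hAγ : A γ := (Finset.mem_filter.mp hγ.2).2
      simp only [hg]
      rw [fA _ hAγ, fhalf _ hAγ hγ.1]
    rw [t1, t2]
    obtain ⟨k, hk⟩ : ∃ k, 2 ^ N = k + 1 := ⟨2 ^ N - 1, by have := Nat.one_le_two_pow (n := N); omega⟩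
    rw [hk, Nat.add_sub_cancel]
    ring
  rw [hsum1]
  set P := (2 ^ N + 1) * m ^ N with hP
  omega
end
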